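/- For any positive integer k, the greedy traversal from 0 to k (taking at each step the largest hop 2^l with 2^l dividing the current index, current index + 2^l ≤ k) visits exactly the partial sums of the binary expansion of k read from the most significant bit: i.e., the visited indices are 0 = s_0 < s_1 < ... < s_t = k where s_{m+1} = s_m + 2^{b_m} and b_0 > b_1 > ... > b_{t−1} are the positions of the 1-bits of k in decreasing order. -/

import Mathlib

/-- The greedy hop level at element `j` towards destination `n`. -/
def hopLevel (j n : ℕ) : ℕ :=
  Nat.findGreatest (fun l => 2 ^ l ∣ j ∧ j + 2 ^ l ≤ n) n

/-- The greedy skip-list traversal from `j` to `n`, computed with explicit fuel. -/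
def greedyAux : ℕ → ℕ → ℕ → List ℕ
  | 0, j, _ => [j]
  | fuel + 1, j, n => if j < n then j :: greedyAux fuel (j + 2 ^ hopLevel j n) n else [j]

/-- The greedy skip-list traversal path from `i` to `n`. -/
def greedy (i n : ℕ) : List ℕ := greedyAux (n - i) i n

/-- The positions of the 1-bits of `k`, in decreasing order. -/
def bitsDesc (k : ℕ) : List ℕ := ((List.range (k + 1)).filter fun i => k.testBit i).reverse

lemma hop_pos_spec {j n : ℕ} (h : j < n) :
    2 ^ hopLevel j n ∣ j ∧ j + 2 ^ hopLevel j n ≤ n := by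
  have h0 : 2 ^ 0 ∣ j ∧ j + 2 ^ 0 ≤ n := ⟨by simpa using one_dvd j, by simpa using h⟩
  exact Nat.findGreatest_spec (P := fun l => 2 ^ l ∣ j ∧ j + 2 ^ l ≤ n) (Nat.zero_le n) h0

lemma greedyAux_fuel : ∀ (f f' j n : ℕ), n - j ≤ f → n - j ≤ f' →
    greedyAux f j n = greedyAux f' j n := by
  intro f
  induction f with
  | zero =>
    intro f' j n h h'
    have hn : ¬ j < n := by omega
    cases f' with
    | zero => rfl
    | succ f' => simp [greedyAux, hn]
  | succ f ih =>
    intro f' j n h h'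
    cases f' with
    | zero =>
      have hn : ¬ j < n := by omega
      simp [greedyAux, hn]
    | succ f' =>
      by_cases hjn : j < n
      · have hpow : 1 ≤ 2 ^ hopLevel j n := Nat.one_le_two_pow
        simp only [greedyAux, if_pos hjn]
        rw [ih f' (j + 2 ^ hopLevel j n) n (by omega) (by omega)]
      · simp [greedyAux, hjn]

lemma hopLevel_shift {b k j : ℕ} (hkb : k < 2 ^ (b + 1)) (hj : j + 2 ^ b < k) :
    hopLevel (j + 2 ^ b) k = hopLevel j (k - 2 ^ b) := by
  have hsum : (2:ℕ) ^ (b + 1) = 2 ^ b + 2 ^ b := by ring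
  have key : ∀ l, (2 ^ l ∣ j + 2 ^ b ∧ j + 2 ^ b + 2 ^ l ≤ k) ↔
      (2 ^ l ∣ j ∧ j + 2 ^ l ≤ k - 2 ^ b) := by
    intro l
    constructor
    · rintro ⟨hd, hle⟩
      have hlb : l < b := by
        have h1 : 2 ^ l < 2 ^ b := by omega
        exact (Nat.pow_lt_pow_iff_right one_lt_two).mp h1
      have hdb : (2:ℕ) ^ l ∣ 2 ^ b := pow_dvd_pow 2 hlb.le
      exact ⟨(Nat.dvd_add_right hdb).mp (by rwa [add_comm] at hd), by omega⟩
    · rintro ⟨hd, hle⟩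
      have hl1 : 1 ≤ 2 ^ l := Nat.one_le_two_pow
      have hlb : l < b := by
        have h1 : 2 ^ l < 2 ^ b := by omega
        exact (Nat.pow_lt_pow_iff_right one_lt_two).mp h1
      have hdb : (2:ℕ) ^ l ∣ 2 ^ b := pow_dvd_pow 2 hlb.le
      exact ⟨by rw [add_comm]; exact (Nat.dvd_add_right hdb).mpr hd, by omega⟩
  have hP0 : 2 ^ 0 ∣ j + 2 ^ b ∧ j + 2 ^ b + 2 ^ 0 ≤ k := ⟨by simpa using one_dvd _, by simpa using hj⟩
  have hQ0 : 2 ^ 0 ∣ j ∧ j + 2 ^ 0 ≤ k - 2 ^ b := ⟨by simpa using one_dvd j, by simp; omega⟩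
  have hP := Nat.findGreatest_spec (P := fun l => 2 ^ l ∣ j + 2 ^ b ∧ j + 2 ^ b + 2 ^ l ≤ k)
    (Nat.zero_le k) hP0
  have hQ := Nat.findGreatest_spec (P := fun l => 2 ^ l ∣ j ∧ j + 2 ^ l ≤ k - 2 ^ b)
    (Nat.zero_le (k - 2 ^ b)) hQ0
  set L1 := hopLevel (j + 2 ^ b) k with hL1
  set L2 := hopLevel j (k - 2 ^ b) with hL2
  have hQ1 := (key L1).mp hP
  have hP2 := (key L2).mpr hQ
  have hb1 : L1 ≤ k - 2 ^ b := by
    have := Nat.lt_two_pow_self (n := L1)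
    omega
  have hb2 : L2 ≤ k := by
    have := Nat.lt_two_pow_self (n := L2)
    omega
  have h12 : L1 ≤ L2 := Nat.le_findGreatest hb1 hQ1
  have h21 : L2 ≤ L1 := Nat.le_findGreatest hb2 hP2
  omega

lemma hopLevel_zero {k : ℕ} (hk : 0 < k) : hopLevel 0 k = Nat.log 2 k := by
  set b := Nat.log 2 k with hb
  have hbk : 2 ^ b ≤ k := Nat.pow_log_le_self 2 hk.ne'
  have hPb : 2 ^ b ∣ (0:ℕ) ∧ 0 + 2 ^ b ≤ k := ⟨dvd_zero _, by omega⟩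
  have hble : b ≤ k := by have := Nat.lt_two_pow_self (n := b); omega
  have h1 : b ≤ hopLevel 0 k := Nat.le_findGreatest hble hPb
  have hspec := hop_pos_spec hk
  have h2 : hopLevel 0 k ≤ b := by
    rw [hb]
    exact (Nat.le_log_iff_pow_le one_lt_two hk.ne').mpr (by omega)
  omega

lemma greedyAux_shift {b k : ℕ} (hkb : k < 2 ^ (b + 1)) :
    ∀ f j, j ≤ k - 2 ^ b →
      greedyAux f (j + 2 ^ b) k = (greedyAux f j (k - 2 ^ b)).map (· + 2 ^ b) := by
  intro f
  induction f with
  | zero => intro j hj; simp [greedyAux]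
  | succ f ih =>
    intro j hj
    by_cases h : j < k - 2 ^ b
    · have h1 : j + 2 ^ b < k := by omega
      have hspec := hop_pos_spec h
      simp only [greedyAux, if_pos h1, if_pos h, hopLevel_shift hkb h1, List.map_cons]
      congr 1
      rw [show j + 2 ^ b + 2 ^ hopLevel j (k - 2 ^ b)
            = (j + 2 ^ hopLevel j (k - 2 ^ b)) + 2 ^ b by ring]
      exact ih _ (by omega)
    · have h1 : ¬ (j + 2 ^ b < k) := by omega
      simp [greedyAux, h1, h]

lemma greedy_rec (k : ℕ) (hk : 0 < k) :
    greedy 0 k = 0 :: (greedy 0 (k - 2 ^ Nat.log 2 k)).map (· + 2 ^ Nat.log 2 k) := by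
  set b := Nat.log 2 k with hb
  have hbk : 2 ^ b ≤ k := Nat.pow_log_le_self 2 hk.ne'
  have hkb : k < 2 ^ (b + 1) := Nat.lt_pow_succ_log_self one_lt_two k
  have hb1 : 1 ≤ 2 ^ b := Nat.one_le_two_pow
  have h2 : greedy 0 k = 0 :: greedyAux (k - 1) (2 ^ hopLevel 0 k) k := by
    obtain ⟨f, rfl⟩ : ∃ f, k = f + 1 := ⟨k - 1, by omega⟩
    simp [greedy, greedyAux, hk]
  rw [h2, hopLevel_zero hk, ← hb]
  congr 1
  rw [greedyAux_fuel (k - 1) (k - 2 ^ b) (2 ^ b) k (by omega) (by omega)]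
  have := greedyAux_shift hkb (k - 2 ^ b) 0 (Nat.zero_le _)
  simp only [zero_add] at this
  rw [this]
  simp [greedy]

lemma filter_range_stable (p : ℕ → Bool) {N N' : ℕ} (h : N ≤ N')
    (hp : ∀ i, N ≤ i → p i = false) :
    (List.range N').filter p = (List.range N).filter p := by
  obtain ⟨d, rfl⟩ : ∃ d, N' = N + d := ⟨N' - N, by omega⟩
  rw [List.range_add, List.filter_append]
  have : ((List.range d).map (N + ·)).filter p = [] := by
    rw [List.filter_eq_nil_iff]
    intro a ha
    simp only [List.mem_map, List.mem_range] at ha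
    obtain ⟨i, _, rfl⟩ := ha
    simp [hp (N + i) (by omega)]
  rw [this, List.append_nil]

lemma bitsDesc_rec (k : ℕ) (hk : 0 < k) :
    bitsDesc k = Nat.log 2 k :: bitsDesc (k - 2 ^ Nat.log 2 k) := by
  set b := Nat.log 2 k with hb
  set m := k - 2 ^ b with hm
  have hbk : 2 ^ b ≤ k := Nat.pow_log_le_self 2 hk.ne'
  have hkb : k < 2 ^ (b + 1) := Nat.lt_pow_succ_log_self one_lt_two k
  have hsum : (2:ℕ) ^ (b + 1) = 2 ^ b + 2 ^ b := by ring
  have hmb : m < 2 ^ b := by omega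
  have hkm : k = 2 ^ b + m := by omega
  have key : (List.range (k + 1)).filter (fun i => k.testBit i)
      = ((List.range (m + 1)).filter (fun i => m.testBit i)) ++ [b] := by
    have hbk' : b + 1 ≤ k + 1 := by have := Nat.lt_two_pow_self (n := b); omega
    rw [filter_range_stable _ hbk' (fun i hi => by
      exact Nat.testBit_eq_false_of_lt (lt_of_lt_of_le hkb (Nat.pow_le_pow_right (by norm_num) hi)))]
    rw [List.range_succ, List.filter_append]
    have htb : k.testBit b = true := by
      have hdiv : k / 2 ^ b = 1 := Nat.div_eq_of_lt_le (by omega) (by omega)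
      simp [Nat.testBit_eq_decide_div_mod_eq, hdiv]
    rw [show (List.filter (fun i => k.testBit i) [b]) = [b] by simp [htb]]
    congr 1
    have e1 : (List.range b).filter (fun i => k.testBit i)
        = (List.range b).filter (fun i => m.testBit i) := by
      apply List.filter_congr
      intro i hi
      rw [List.mem_range] at hi
      rw [hkm, Nat.testBit_two_pow_add_gt hi]
    rw [e1]
    rcases le_total b (m + 1) with hc | hc
    · rw [filter_range_stable _ hc (fun i hi => by
        exact Nat.testBit_eq_false_of_lt (lt_of_lt_of_le hmb (Nat.pow_le_pow_right (by norm_num) hi)))]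
    · rw [filter_range_stable _ hc (fun i hi => by
        refine Nat.testBit_eq_false_of_lt (lt_of_lt_of_le (Nat.lt_two_pow_self (n := m)) ?_)
        exact Nat.pow_le_pow_right (by norm_num) (by omega))]
  unfold bitsDesc
  rw [key]
  simp

lemma rhs_rec (b : ℕ) (L : List ℕ) :
    (List.range ((b :: L).length + 1)).map
        (fun m => (((b :: L).take m).map (fun x => 2 ^ x)).sum)
      = 0 :: ((List.range (L.length + 1)).map
          (fun m => ((L.take m).map (fun x => 2 ^ x)).sum)).map (· + 2 ^ b) := by
  rw [List.length_cons, List.range_succ_eq_map]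
  simp only [List.map_cons, List.take_zero, List.map_nil, List.sum_nil, List.map_map]
  congr 1
  apply List.map_congr_left
  intro m hm
  simp [List.take_succ_cons, Nat.succ_eq_add_one]
  ring

lemma main_all : ∀ k, greedy 0 k = (List.range ((bitsDesc k).length + 1)).map
      (fun m => (((bitsDesc k).take m).map (fun b => 2 ^ b)).sum) := by
  intro k
  induction k using Nat.strong_induction_on with
  | _ k ih =>
    rcases Nat.eq_zero_or_pos k with rfl | hk
    · have hb : bitsDesc 0 = [] := by simp [bitsDesc]
      simp [greedy, greedyAux, hb]
    · have hb1 : 1 ≤ 2 ^ Nat.log 2 k := Nat.one_le_two_pow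
      have hm : k - 2 ^ Nat.log 2 k < k := by omega
      rw [greedy_rec k hk, bitsDesc_rec k hk, rhs_rec, ← ih _ hm]

/-- The greedy traversal from `0` to `k` visits exactly the partial sums of the binary
expansion of `k` read from the most significant bit: the visited indices are
`0 = s_0 < s_1 < ... < s_t = k` where `s_{m+1} = s_m + 2 ^ b_m` and `b_0 > b_1 > ...`
are the 1-bit positions of `k` in decreasing order. -/
theorem stmt16 (k : ℕ) (hk : 0 < k) :
    greedy 0 k = (List.range ((bitsDesc k).length + 1)).map
      (fun m => (((bitsDesc k).take m).map (fun b => 2 ^ b)).sum) := by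
  exact main_all k
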